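/- Let d, K ≥ 2 be positive integers, x ∈ ℝ^d, prototypes c_1,…,c_K ∈ ℝ^d with x ≠ c_z for every z, posterior p(z|x) = exp(−½‖x−c_z‖) / Σ_{z'} exp(−½‖x−c_{z'}‖), and loss L_{xy} = −log p(y|x). Then the sum over all classes of the gradient norms satisfies Σ_{z=1}^K ‖∇_{c_z} L_{xy}‖ = 1 − p(y|x) ≤ 1; that is, the total gradient magnitude distributed across all prototypes by a single sample equals its misclassification probability. -/

import Mathlib

/-!
The loss depends on `c_z` only through the logit `s_z = -½ r_z` with `r_z = ‖x - c_z‖`. Away from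
`c_z = x` the gradient of a function of `r_z` is its `r_z`-derivative times a unit vector, so
`‖∇_{c_z} L‖ = ½ |∂L/∂s_z| = ½ |p(z|x) - [z = y]|`, the partial derivative of the cross-entropy of a
softmax. Summing, `Σ_z |p(z|x) - [z = y]|` is the `ℓ¹` distance from `p(·|x)` to the point mass at
`y`, which is `2 (1 - p(y|x))`.
-/

open Real Finset

section Gradient

variable {E : Type*} [NormedAddCommGroup E] [InnerProductSpace ℝ E]

theorem hasFDerivAt_norm {v : E} (hv : v ≠ 0) :
    HasFDerivAt (‖·‖) (‖v‖⁻¹ • innerSL ℝ v) v := by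
  have hpos : 0 < ‖v‖ := norm_pos_iff.mpr hv
  convert (hasStrictFDerivAt_norm_sq v).hasFDerivAt.sqrt (by positivity) using 1
  · simp only [sqrt_sq (norm_nonneg _)]
  · ext u
    simp only [smul_apply, innerSL_apply_apply, smul_eq_mul, sqrt_sq hpos.le,
      nsmul_eq_mul, Nat.cast_ofNat]
    field_simp

variable [CompleteSpace E]

theorem hasGradientAt_comp_norm_sub {φ : ℝ → ℝ} {φ' : ℝ} {x w : E} (hxw : x ≠ w)
    (hφ : HasDerivAt φ φ' ‖x - w‖) :
    HasGradientAt (fun u => φ ‖x - u‖) ((φ' * ‖x - w‖⁻¹) • (w - x)) w := by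
  have hdist := (hasFDerivAt_norm (sub_ne_zero.mpr hxw)).comp w ((hasFDerivAt_id w).const_sub x)
  rw [hasGradientAt_iff_hasFDerivAt]
  refine (hφ.comp_hasFDerivAt w hdist).congr_fderiv ?_
  ext u
  simp only [map_sub, ContinuousLinearMap.comp_neg, ContinuousLinearMap.comp_id, smul_neg,
    neg_apply, smul_apply, sub_apply, innerSL_apply_apply, smul_eq_mul, map_smul,
    InnerProductSpace.toDual_apply_apply]
  ring

theorem norm_gradient_comp_norm_sub {φ : ℝ → ℝ} {φ' : ℝ} {x w : E} (hxw : x ≠ w)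
    (hφ : HasDerivAt φ φ' ‖x - w‖) :
    ‖gradient (fun u => φ ‖x - u‖) w‖ = |φ'| := by
  have hpos : 0 < ‖x - w‖ := norm_pos_iff.mpr (sub_ne_zero.mpr hxw)
  rw [(hasGradientAt_comp_norm_sub hxw hφ).gradient, norm_smul, norm_sub_rev w x, norm_mul,
    norm_inv, norm_norm, Real.norm_eq_abs, mul_assoc, inv_mul_cancel₀ hpos.ne', mul_one]

end Gradient

section Softmax

variable {ι : Type*} [Fintype ι]

noncomputable def softmax (s : ι → ℝ) (z : ι) : ℝ :=
  exp (s z) / ∑ z', exp (s z')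

theorem softmax_pos (s : ι → ℝ) (z : ι) : 0 < softmax s z :=
  div_pos (exp_pos _) (sum_pos (fun _ _ => exp_pos _) ⟨z, mem_univ z⟩)

theorem sum_softmax [Nonempty ι] (s : ι → ℝ) : ∑ z, softmax s z = 1 := by
  simp only [softmax]
  rw [← sum_div, div_self (sum_pos (fun _ _ => exp_pos _) univ_nonempty).ne']

variable [DecidableEq ι]

theorem sum_abs_sub_ite_eq_two_mul_one_sub {p : ι → ℝ} (hp : ∀ z, 0 ≤ p z) (hsum : ∑ z, p z = 1) (y : ι) :
    ∑ z, |p z - if z = y then 1 else 0| = 2 * (1 - p y) := by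
  have hrest : ∑ z ∈ {y}ᶜ, p z = 1 - p y := by
    rw [← hsum, Fintype.sum_eq_add_sum_compl y]; ring
  have hpy : p y ≤ 1 := by linarith [sum_nonneg fun z (_ : z ∈ ({y}ᶜ : Finset ι)) => hp z]
  rw [Fintype.sum_eq_add_sum_compl y, if_pos rfl, abs_of_nonpos (by linarith),
    sum_congr rfl fun z hz => by rw [if_neg (by simpa using hz), sub_zero, abs_of_nonneg (hp z)],
    hrest]
  ring

theorem hasDerivAt_neg_log_softmax_update (s : ι → ℝ) (z y : ι) :
    HasDerivAt (fun t => -log (softmax (Function.update s z t) y))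
      (softmax s z - if z = y then 1 else 0) (s z) := by
  have hcoord : ∀ z', HasDerivAt (fun t => Function.update s z t z')
      ((Pi.single z 1 : ι → ℝ) z') (s z) :=
    hasDerivAt_pi.1 (hasDerivAt_update s z (s z))
  have hexp_sum_pos : ∀ t, 0 < ∑ z', exp (Function.update s z t z') :=
    fun t => sum_pos (fun _ _ => exp_pos _) ⟨z, mem_univ z⟩
  have hlse := (HasDerivAt.fun_sum fun z' (_ : z' ∈ univ) => (hcoord z').exp).log
    (hexp_sum_pos (s z)).ne'
  have hloss : (fun t => -log (softmax (Function.update s z t) y))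
      = fun t => log (∑ z', exp (Function.update s z t z')) - Function.update s z t y := by
    funext t
    rw [softmax, log_div (exp_pos _).ne' (hexp_sum_pos t).ne', log_exp]
    ring
  rw [hloss]
  refine (hlse.fun_sub (hcoord y)).congr_deriv ?_
  simp [softmax, Pi.single_apply, eq_comm]

end Softmax

section Prototype

variable {E ι : Type*} [NormedAddCommGroup E] [InnerProductSpace ℝ E] [CompleteSpace E]
  [Fintype ι] [DecidableEq ι]

noncomputable def prototypeLogits (x : E) (c : ι → E) (z : ι) : ℝ :=
  -(1 / 2) * ‖x - c z‖

theorem norm_gradient_neg_log_softmax_prototypeLogits {x : E} {c : ι → E} {z : ι}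
    (hx : x ≠ c z) (y : ι) :
    ‖gradient (fun w => -log (softmax (prototypeLogits x (Function.update c z w)) y)) (c z)‖
      = |softmax (prototypeLogits x c) z - if z = y then 1 else 0| / 2 := by
  have hlogits : ∀ w, prototypeLogits x (Function.update c z w)
      = Function.update (prototypeLogits x c) z (-(1 / 2) * ‖x - w‖) := fun w =>
    funext fun z' => Function.apply_update (fun _ v => -(1 / 2) * ‖x - v‖) c z w z'
  have hφ := (hasDerivAt_neg_log_softmax_update (prototypeLogits x c) z y).comp ‖x - c z‖
    ((hasDerivAt_id _).const_mul (-(1 / 2)))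
  simp only [hlogits]
  refine (norm_gradient_comp_norm_sub hx hφ).trans ?_
  rw [abs_mul]
  norm_num [div_eq_mul_inv]

end Prototype

theorem prototype_total_gradient_norm_general
    (d K : ℕ)
    (x : EuclideanSpace ℝ (Fin d)) (c : Fin K → EuclideanSpace ℝ (Fin d))
    (hx : ∀ z, x ≠ c z) (y : Fin K)
    (p : Fin K → ℝ)
    (hp : ∀ z, p z =
      Real.exp (-(1 / 2) * ‖x - c z‖) / ∑ z', Real.exp (-(1 / 2) * ‖x - c z'‖)) :
    (∑ z : Fin K, ‖gradient (fun w : EuclideanSpace ℝ (Fin d) =>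
        -Real.log (Real.exp (-(1 / 2) * ‖x - Function.update c z w y‖) /
          ∑ z', Real.exp (-(1 / 2) * ‖x - Function.update c z w z'‖))) (c z)‖)
      = 1 - p y ∧ 1 - p y ≤ 1 := by
  have : Nonempty (Fin K) := ⟨y⟩
  have hp_softmax : p = softmax (prototypeLogits x c) := funext hp
  refine ⟨(sum_congr rfl fun z _ =>
    norm_gradient_neg_log_softmax_prototypeLogits (hx z) y).trans ?_, ?_⟩
  · rw [← sum_div, sum_abs_sub_ite_eq_two_mul_one_sub (fun z => (softmax_pos _ z).le) (sum_softmax _) y,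
    hp_softmax]
    ring
  · exact sub_le_self 1 (hp_softmax ▸ (softmax_pos _ y).le)

/-- For the Euclidean-distance prototype classifier with `K ≥ 2`, the sum
over all classes of the gradient norms of the NLL loss `L_{xy}` satisfies
`∑_{z=1}^K ‖∇_{c_z} L_{xy}‖ = 1 - p(y|x) ≤ 1`: the total gradient magnitude distributed
across all prototypes by a single sample equals its misclassification probability. -/
theorem prototype_total_gradient_norm
    (d K : ℕ) (hd : 0 < d) (hK : 2 ≤ K)
    (x : EuclideanSpace ℝ (Fin d)) (c : Fin K → EuclideanSpace ℝ (Fin d))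
    (hx : ∀ z, x ≠ c z) (y : Fin K)
    (p : Fin K → ℝ)
    (hp : ∀ z, p z =
      Real.exp (-(1 / 2) * ‖x - c z‖) / ∑ z', Real.exp (-(1 / 2) * ‖x - c z'‖)) :
    (∑ z : Fin K, ‖gradient (fun w : EuclideanSpace ℝ (Fin d) =>
        -Real.log (Real.exp (-(1 / 2) * ‖x - Function.update c z w y‖) /
          ∑ z', Real.exp (-(1 / 2) * ‖x - Function.update c z w z'‖))) (c z)‖)
      = 1 - p y ∧ 1 - p y ≤ 1 :=
  prototype_total_gradient_norm_general d K x c hx y p hp
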